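/- arXiv:1004.1783 — 4 statements merged into one kernel-verified Lean document; each statement's English description precedes it below -/
import Mathlib

section
/- Let n ≥ 1 be an integer and suppose P is analytic near z=1 with P(2)=1, satisfying P(z+1) = 2^{−n} P(2z) + (2^{n+1}−2)·2^{−(n+1)} P(2/z) z^{n−1} for all z near 1. Then P'(2) = (2^n − 1)(n−1)/(3·2^n − 4). -/
/-!
Differentiate the functional equation once and evaluate at `z = 1`: every argument
`z + 1`, `2z`, `2/z` becomes `2`, so the chain rule turns the equation into a linear
equation for `P'(2)`, namely `(3·2^n − 4) P'(2) = (2^n − 1)(n − 1) P(2)`.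
-/

open Filter

lemma three_mul_two_pow_sub_four_ne_zero (n : ℕ) : (3 : ℂ) * 2 ^ n - 4 ≠ 0 := by
  rw [sub_ne_zero]
  exact_mod_cast (by omega : 3 * 2 ^ n ≠ 4)

/-- `z ^ (n - 1)` uses truncated subtraction, hence the factor `((n - 1 : ℕ) : ℂ)`. -/
lemma hasDerivAt_functionalEquation_rhs (n : ℕ) {P : ℂ → ℂ} {D : ℂ} (hP : HasDerivAt P D 2) :
    HasDerivAt
      (fun z : ℂ => P (2 * z) / 2 ^ n + (2 ^ (n + 1) - 2) * P (2 / z) * z ^ (n - 1) / 2 ^ (n + 1))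
      (D * 2 / 2 ^ n +
        (2 ^ (n + 1) - 2) * (D * (-2) + P 2 * ((n - 1 : ℕ) : ℂ)) / 2 ^ (n + 1)) 1 := by
  have hScale : HasDerivAt (fun z : ℂ => P (2 * z)) (D * 2) 1 := by
    have hP' : HasDerivAt P D (2 * 1) := by simpa using hP
    exact hP'.comp 1 (by simpa using (hasDerivAt_id (1 : ℂ)).const_mul (2 : ℂ))
  have hInv : HasDerivAt (fun z : ℂ => P (2 / z)) (D * (-2)) 1 := by
    have hP' : HasDerivAt P D (2 / 1) := by simpa using hP
    refine hP'.comp 1 ?_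
    convert (hasDerivAt_inv (one_ne_zero (α := ℂ))).const_mul (2 : ℂ) using 1
    · exact funext fun z => div_eq_mul_inv 2 z
    · norm_num
  have hPow : HasDerivAt (fun z : ℂ => z ^ (n - 1)) ((n - 1 : ℕ) : ℂ) 1 := by
    simpa using hasDerivAt_pow (n - 1) (1 : ℂ)
  refine ((hScale.div_const (2 ^ n)).add
    (((hInv.const_mul (2 ^ (n + 1) - 2)).mul hPow).div_const (2 ^ (n + 1)))).congr_deriv ?_
  rw [div_one, one_pow]
  ring

lemma eq_of_differentiated_functionalEquation (n : ℕ) {D : ℂ}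
    (h : D = D * 2 / 2 ^ n + (2 ^ (n + 1) - 2) * (D * (-2) + ((n - 1 : ℕ) : ℂ)) / 2 ^ (n + 1)) :
    D = ((2 : ℂ) ^ n - 1) * ((n : ℂ) - 1) / (3 * 2 ^ n - 4) := by
  -- for `n = 0` the factor `2 ^ n - 1` vanishes, so the truncation in `n - 1` is harmless
  have hTrunc : ((2 : ℂ) ^ n - 1) * ((n - 1 : ℕ) : ℂ) = ((2 : ℂ) ^ n - 1) * ((n : ℂ) - 1) := by
    cases n <;> simp
  rw [eq_div_iff (three_mul_two_pow_sub_four_ne_zero n), ← hTrunc]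
  rw [pow_succ] at h
  field_simp at h
  linear_combination h

theorem deriv_P_at_two_general (n : ℕ) (P : ℂ → ℂ)
    (hP2an : AnalyticAt ℂ P 2) (hP2 : P 2 = 1)
    (heq : ∀ᶠ z in nhds (1 : ℂ),
      P (z + 1) = P (2 * z) / 2 ^ n +
        (2 ^ (n + 1) - 2) * P (2 / z) * z ^ (n - 1) / 2 ^ (n + 1)) :
    deriv P 2 = ((2 : ℂ) ^ n - 1) * ((n : ℂ) - 1) / (3 * 2 ^ n - 4) := by
  have hP : HasDerivAt P (deriv P 2) 2 := hP2an.differentiableAt.hasDerivAt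
  have hShift : HasDerivAt (fun z : ℂ => P (z + 1)) (deriv P 2) 1 := by
    have hP' : HasDerivAt P (deriv P 2) (1 + 1) := by norm_num [hP]
    simpa using hP'.comp_add_const 1 1
  apply eq_of_differentiated_functionalEquation n
  have h := EventuallyEq.deriv_eq heq
  rwa [hShift.deriv, (hasDerivAt_functionalEquation_rhs n hP).deriv, hP2, one_mul] at h

/-- If `P` is analytic (near `1` and near `2`), `P 2 = 1`, and
`P(z+1) = 2^{-n} P(2z) + (2^{n+1}−2) 2^{-(n+1)} P(2/z) z^{n-1}` for all `z` near `1`,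
then `P'(2) = (2^n − 1)(n − 1)/(3·2^n − 4)`. -/
theorem deriv_P_at_two (n : ℕ) (hn : 1 ≤ n) (P : ℂ → ℂ)
    (hP1 : AnalyticAt ℂ P 1) (hP2an : AnalyticAt ℂ P 2) (hP2 : P 2 = 1)
    (heq : ∀ᶠ z in nhds (1 : ℂ),
      P (z + 1) = P (2 * z) / 2 ^ n +
        (2 ^ (n + 1) - 2) * P (2 / z) * z ^ (n - 1) / 2 ^ (n + 1)) :
    deriv P 2 = ((2 : ℂ) ^ n - 1) * ((n : ℂ) - 1) / (3 * 2 ^ n - 4) :=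
  deriv_P_at_two_general n P hP2an hP2 heq
end

section
/- Under the same hypotheses (P analytic near z=1, P(2)=1, P(z+1) = 2^{−n}P(2z) + (2^{n+1}−2)2^{−(n+1)} P(2/z) z^{n−1}), the second derivative satisfies P''(2) = (2^n−1)(n−1)(n−2)/(3(3·2^n−4)). -/
/-!
At `z = 1` both arguments `2 * z` and `2 / z` equal `2`, so differentiating the functional
equation once and twice at `z = 1` (chain rule for `P (2 / z)`, Leibniz rule for its product with
`z ^ (n - 1)`) gives two linear equations in `P'(2)` and `P''(2)`. The first yields
`P'(2) = (2^n - 1)(n - 1)/(3·2^n - 4)`; substituting this into the second gives `P''(2)`.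
-/

open Topology

section
variable {𝕜 F : Type*} [NontriviallyNormedField 𝕜] [NormedAddCommGroup F] [NormedSpace 𝕜 F]

theorem hasDerivAt_const_div (c : 𝕜) {x : 𝕜} (hx : x ≠ 0) :
    HasDerivAt (fun y ↦ c / y) (-(c / x ^ 2)) x := by
  simpa [div_eq_mul_inv] using (hasDerivAt_inv hx).const_mul c

theorem HasDerivAt.comp_const_mul {f : 𝕜 → F} {f' : F} {c x : 𝕜} (hf : HasDerivAt f f' (c * x)) :
    HasDerivAt (fun y ↦ f (c * y)) (c • f') x :=
  hf.scomp x (by simpa using (hasDerivAt_id x).const_mul c)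

theorem HasDerivAt.comp_const_div {f : 𝕜 → F} {f' : F} {c x : 𝕜} (hf : HasDerivAt f f' (c / x))
    (hx : x ≠ 0) : HasDerivAt (fun y ↦ f (c / y)) (-(c / x ^ 2) • f') x :=
  hf.scomp x (hasDerivAt_const_div c hx)

theorem iteratedDeriv_two_const_div (c x : 𝕜) :
    iteratedDeriv 2 (fun y ↦ c / y) x = 2 * c / x ^ 3 := by
  simp only [div_eq_mul_inv, iteratedDeriv_const_mul_field, iteratedDeriv_eq_iterate]
  rw [iter_deriv_inv]
  simp only [even_two, Even.neg_pow, one_pow, Nat.factorial_two, Nat.cast_ofNat, one_mul,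
    Int.reduceNeg, Int.reduceSub, zpow_neg, zpow_ofNat]
  ring

theorem iteratedDeriv_two_comp {f : 𝕜 → F} {φ : 𝕜 → 𝕜} {x : 𝕜}
    (hf : ContDiffAt 𝕜 2 f (φ x)) (hφ : ContDiffAt 𝕜 2 φ x) :
    iteratedDeriv 2 (fun y ↦ f (φ y)) x =
      deriv φ x ^ 2 • iteratedDeriv 2 f (φ x) + iteratedDeriv 2 φ x • deriv f (φ x) := by
  have hderiv : deriv (fun y ↦ f (φ y)) =ᶠ[𝓝 x] fun y ↦ deriv φ y • deriv f (φ y) := by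
    filter_upwards [hφ.eventually (by simp), hφ.continuousAt.eventually (hf.eventually (by simp))]
      with y hφy hfy
    exact deriv.scomp y (hfy.differentiableAt (by simp)) (hφy.differentiableAt (by simp))
  have hf' : DifferentiableAt 𝕜 (deriv f) (φ x) :=
    (hf.derivWithin (m := 1) (by norm_num)).differentiableAt one_ne_zero
  have hφ' : DifferentiableAt 𝕜 (deriv φ) x :=
    (hφ.derivWithin (m := 1) (by norm_num)).differentiableAt one_ne_zero
  have hφ1 : DifferentiableAt 𝕜 φ x := hφ.differentiableAt two_ne_zero
  have hf'φ : DifferentiableAt 𝕜 (fun y ↦ deriv f (φ y)) x := hf'.comp x hφ1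
  simp only [iteratedDeriv_succ, iteratedDeriv_zero]
  rw [hderiv.deriv_eq, deriv_fun_smul hφ' hf'φ,
    show deriv (fun y ↦ deriv f (φ y)) x = _ from deriv.scomp x hf' hφ1]
  rw [smul_smul, ← sq, add_comm]

theorem iteratedDeriv_two_comp_const_mul {f : 𝕜 → F} {c x : 𝕜} (hf : ContDiffAt 𝕜 2 f (c * x)) :
    iteratedDeriv 2 (fun y ↦ f (c * y)) x = c ^ 2 • iteratedDeriv 2 f (c * x) := by
  rw [iteratedDeriv_two_comp hf (by fun_prop)]
  simp [iteratedDeriv_succ]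

theorem iteratedDeriv_two_comp_const_div {f : 𝕜 → F} {c x : 𝕜} (hf : ContDiffAt 𝕜 2 f (c / x))
    (hx : x ≠ 0) :
    iteratedDeriv 2 (fun y ↦ f (c / y)) x =
      (c / x ^ 2) ^ 2 • iteratedDeriv 2 f (c / x) + (2 * c / x ^ 3) • deriv f (c / x) := by
  rw [iteratedDeriv_two_comp hf (by fun_prop (disch := exact hx)), iteratedDeriv_two_const_div,
    deriv_const_div_id, neg_div, neg_sq]
end

section
variable {𝕜 : Type*} [NontriviallyNormedField 𝕜] {P : 𝕜 → 𝕜} {α β : 𝕜} {k : ℕ}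

theorem deriv_at_two_eq_of_eventuallyEq (hP : DifferentiableAt 𝕜 P 2)
    (heq : (fun z ↦ P (z + 1)) =ᶠ[𝓝 1] fun z ↦ α * P (2 * z) + β * (P (2 / z) * z ^ k)) :
    deriv P 2 = α * (2 * deriv P 2) + β * (-2 * deriv P 2 + k * P 2) := by
  have hu : HasDerivAt (fun z ↦ P (2 * z)) (2 * deriv P 2) 1 :=
    HasDerivAt.comp_const_mul (by simpa using hP.hasDerivAt)
  have hv : HasDerivAt (fun z ↦ P (2 / z)) (-(2 / 1 ^ 2) * deriv P 2) 1 :=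
    HasDerivAt.comp_const_div (by simpa using hP.hasDerivAt) one_ne_zero
  have hR : HasDerivAt (fun z ↦ α * P (2 * z) + β * (P (2 / z) * z ^ k))
      (α * (2 * deriv P 2) + β * (-(2 / 1 ^ 2) * deriv P 2 * 1 ^ k + P (2 / 1) * (k * 1 ^ (k - 1))))
      1 :=
    (hu.const_mul α).add ((hv.mul (hasDerivAt_pow k 1)).const_mul β)
  have h := heq.deriv_eq
  rw [deriv_comp_add_const, one_add_one_eq_two, hR.deriv] at h
  simp only [one_pow, mul_one, div_one] at h
  linear_combination h

theorem iteratedDeriv_two_at_two_eq_of_eventuallyEq (hP : ContDiffAt 𝕜 2 P 2)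
    (heq : (fun z ↦ P (z + 1)) =ᶠ[𝓝 1] fun z ↦ α * P (2 * z) + β * (P (2 / z) * z ^ k)) :
    iteratedDeriv 2 P 2 = α * (4 * iteratedDeriv 2 P 2) +
      β * (4 * iteratedDeriv 2 P 2 + 4 * (1 - k) * deriv P 2 + k * (k - 1) * P 2) := by
  have hP₁ : ContDiffAt 𝕜 2 P (2 * 1) := by rwa [mul_one]
  have hP₂ : ContDiffAt 𝕜 2 P (2 / 1) := by rwa [div_one]
  have hu : ContDiffAt 𝕜 2 (fun z ↦ P (2 * z)) 1 := hP₁.comp 1 (by fun_prop)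
  have hv : ContDiffAt 𝕜 2 (fun z ↦ P (2 / z)) 1 := hP₂.comp 1 (by fun_prop (disch := norm_num))
  have hw : ContDiffAt 𝕜 2 (fun z : 𝕜 ↦ z ^ k) 1 := by fun_prop
  have hv' : deriv (fun z ↦ P (2 / z)) 1 = -(2 / 1 ^ 2) * deriv P 2 :=
    (HasDerivAt.comp_const_div (by simpa using (hP.differentiableAt two_ne_zero).hasDerivAt)
      one_ne_zero).deriv
  have hk : ((k - 1 : ℕ) : 𝕜) * k = (k - 1) * k := by cases k <;> simp
  have h := heq.iteratedDeriv_eq 2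
  rw [iteratedDeriv_comp_add_const] at h
  beta_reduce at h
  rw [one_add_one_eq_two, iteratedDeriv_fun_add (contDiffAt_const.mul hu)
    (contDiffAt_const.mul (hv.mul hw)), iteratedDeriv_const_mul_field,
    iteratedDeriv_const_mul_field, iteratedDeriv_fun_mul hv hw] at h
  simp only [Finset.sum_range_succ, Finset.sum_range_zero] at h
  rw [iteratedDeriv_two_comp_const_mul hP₁, iteratedDeriv_two_comp_const_div hP₂ one_ne_zero] at h
  simp only [mul_one, smul_eq_mul, Nat.choose_zero_right, Nat.cast_one, iteratedDeriv_zero, div_one,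
    one_mul, tsub_zero, iteratedDeriv_pow, Nat.descFactorial_succ, Nat.descFactorial_zero,
    Nat.cast_mul, hk, one_pow, zero_add, Nat.choose_succ_self_right, Nat.reduceAdd, Nat.cast_ofNat,
    iteratedDeriv_one, hv', neg_mul, mul_neg, Nat.add_one_sub_one, Nat.choose_self, tsub_self] at h
  linear_combination h
end

theorem second_deriv_P_at_two_general (n : ℕ) (hn : 1 ≤ n) (P : ℂ → ℂ)
    (hP2an : AnalyticAt ℂ P 2) (hP2 : P 2 = 1)
    (heq : ∀ᶠ z in nhds (1 : ℂ),
      P (z + 1) = P (2 * z) / 2 ^ n +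
        (2 ^ (n + 1) - 2) * P (2 / z) * z ^ (n - 1) / 2 ^ (n + 1)) :
    iteratedDeriv 2 P 2 =
      ((2 : ℂ) ^ n - 1) * ((n : ℂ) - 1) * ((n : ℂ) - 2) / (3 * (3 * 2 ^ n - 4)) := by
  have ha : (2 : ℂ) ^ n ≠ 0 := pow_ne_zero n two_ne_zero
  have hfe : (fun z ↦ P (z + 1)) =ᶠ[𝓝 1] fun z ↦
      (2 ^ n)⁻¹ * P (2 * z) + ((2 ^ n - 1) / 2 ^ n) * (P (2 / z) * z ^ (n - 1)) :=
    heq.mono fun z hz ↦ hz.trans (by field_simp; ring)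
  have h1 := deriv_at_two_eq_of_eventuallyEq hP2an.differentiableAt hfe
  have h2 := iteratedDeriv_two_at_two_eq_of_eventuallyEq hP2an.contDiffAt hfe
  have hk : ((n - 1 : ℕ) : ℂ) = n - 1 := by rw [Nat.cast_sub hn, Nat.cast_one]
  have hden : (3 * 2 ^ n - 4 : ℂ) ≠ 0 := by
    have : 2 ≤ 2 ^ n := Nat.le_self_pow (Nat.one_le_iff_ne_zero.mp hn) 2
    exact sub_ne_zero.2 (by exact_mod_cast (by omega : 3 * 2 ^ n ≠ 4))
  rw [hP2, hk] at h1 h2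
  field_simp at h1 h2
  rw [eq_div_iff (mul_ne_zero three_ne_zero hden)]
  refine mul_left_cancel₀ ha ?_
  linear_combination -(3 * 2 ^ n - 4) * h2 + 4 * (2 ^ n - 1) * (n - 2) * h1

/-- Under the same hypotheses as for `P'(2)`, the second derivative satisfies
`P''(2) = (2^n − 1)(n − 1)(n − 2)/(3(3·2^n − 4))`. -/
theorem second_deriv_P_at_two (n : ℕ) (hn : 1 ≤ n) (P : ℂ → ℂ)
    (hP1 : AnalyticAt ℂ P 1) (hP2an : AnalyticAt ℂ P 2) (hP2 : P 2 = 1)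
    (heq : ∀ᶠ z in nhds (1 : ℂ),
      P (z + 1) = P (2 * z) / 2 ^ n +
        (2 ^ (n + 1) - 2) * P (2 / z) * z ^ (n - 1) / 2 ^ (n + 1)) :
    iteratedDeriv 2 P 2 =
      ((2 : ℂ) ^ n - 1) * ((n : ℂ) - 1) * ((n : ℂ) - 2) / (3 * (3 * 2 ^ n - 4)) :=
  second_deriv_P_at_two_general n hn P hP2an hP2 heq
end

section
/- Define D_ℓ(n) recursively by D_0(n)=1 and D_ℓ(n) = ((2^n−1)/(2^n·A_ℓ)) · Σ_{i=0}^{ℓ−1} D_i(n)(−1)^i 2^i C(ℓ,i), where A_ℓ = 1−2^ℓ if ℓ is even and A_ℓ = 2^ℓ+1−2^{ℓ+1−n} if ℓ is odd. If P is analytic near z=1 with P(2)=1 satisfying P(z+1)=2^{−n}P(2z)+(2^{n+1}−2)2^{−(n+1)}P(2/z)z^{n−1}, then for all ℓ ≤ n−1, the ℓ-th derivative P^{(ℓ)}(2) = (n−1)!/(n−ℓ−1)! · D_ℓ(n), and P^{(ℓ)}(2)=0 for ℓ ≥ n; in particular P is a polynomial of degree at most n−1. -/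
open Finset in
/-- `A_ℓ` from the recursion: `1 − 2^ℓ` for even `ℓ`, `2^ℓ + 1 − 2^{ℓ+1−n}` for odd `ℓ`. -/
noncomputable def gkwA (n ℓ : ℕ) : ℂ :=
  if Even ℓ then 1 - 2 ^ ℓ else 2 ^ ℓ + 1 - 2 ^ (ℓ + 1) / 2 ^ n

open Finset in
/-- The coefficients `D_ℓ(n)`: `D_0 = 1` and
`D_ℓ = ((2^n−1)/(2^n A_ℓ)) Σ_{i<ℓ} D_i (−1)^i 2^i C(ℓ,i)`. -/
noncomputable def gkwD (n : ℕ) : ℕ → ℂ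
  | 0 => 1
  | (ℓ + 1) =>
      ((2 ^ n - 1) / (2 ^ n * gkwA n (ℓ + 1))) *
        ∑ i ∈ (Finset.range (ℓ + 1)).attach,
          gkwD n i.1 * (-1) ^ i.1 * 2 ^ i.1 * ((ℓ + 1).choose i.1 : ℂ)
  decreasing_by exact Finset.mem_range.mp i.2

/-!
The polynomial `F(z) = ∑_{k<n} C(n-1,k) D_k(n) (z-2)^k` solves the functional equation:
comparing the coefficients of `(z-1)^m` on both sides reduces it to the recursion defining
`D_m(n)`. The difference `h = P - F` is entire, vanishes at `2` and solves the same linear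
equation. If `h` had finite order `m ≥ 1` at `2`, say `h(z) = (z-2)^m g(z)` with `g(2) ≠ 0`,
dividing the equation by `(z-1)^m` and letting `z → 1` would give `g(2) A_m = 0`,
contradicting `A_m ≠ 0`. Hence `h` vanishes near `2`, so everywhere, and `P = F`.
-/

open Finset Filter Polynomial Topology

def IsGKWSolution (n : ℕ) (P : ℂ → ℂ) : Prop :=
  ∀ᶠ z in 𝓝 (1 : ℂ),
    P (z + 1) = P (2 * z) / 2 ^ n + (2 ^ (n + 1) - 2) * P (2 / z) * z ^ (n - 1) / 2 ^ (n + 1)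

theorem IsGKWSolution.sub {n : ℕ} {P Q : ℂ → ℂ} (hP : IsGKWSolution n P)
    (hQ : IsGKWSolution n Q) : IsGKWSolution n (P - Q) := by
  filter_upwards [hP, hQ] with z hPz hQz
  simp only [Pi.sub_apply, hPz, hQz]
  ring

theorem gkwA_ne_zero {n m : ℕ} (hn : 1 ≤ n) (hm : 1 ≤ m) : gkwA n m ≠ 0 := by
  unfold gkwA
  split_ifs
  · exact sub_ne_zero.mpr (by exact_mod_cast (Nat.one_lt_two_pow (n := m) (by omega)).ne)
  · have hle : (2 : ℝ) ^ (m + 1) / 2 ^ n ≤ 2 ^ m := by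
      rw [div_le_iff₀ (by positivity), ← pow_add]
      exact pow_le_pow_right₀ one_le_two (by omega)
    have hpos : (0 : ℝ) < 2 ^ m + 1 - 2 ^ (m + 1) / 2 ^ n := by
      linarith [pow_pos (two_pos : (0 : ℝ) < 2) m]
    simpa using Complex.ofReal_ne_zero.mpr hpos.ne'

/-- Comparing the terms of order `m` at `z = 2` on both sides of the functional equation
leaves the factor `A_m`. -/
theorem gkwA_eq (n m : ℕ) :
    gkwA n m = 1 - 2 ^ m / 2 ^ n - (2 ^ n - 1) / 2 ^ n * (-2 : ℂ) ^ m := by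
  unfold gkwA
  rcases Nat.even_or_odd m with hm | hm
  · rw [if_pos hm, hm.neg_pow]
    field_simp
    ring
  · rw [if_neg (Nat.not_even_iff_odd.mpr hm), hm.neg_pow]
    field_simp
    ring

theorem gkwD_succ (n ℓ : ℕ) :
    gkwD n (ℓ + 1) = (2 ^ n - 1) / 2 ^ n / gkwA n (ℓ + 1) *
      ∑ i ∈ range (ℓ + 1), gkwD n i * (-1) ^ i * 2 ^ i * ((ℓ + 1).choose i : ℂ) := by
  rw [gkwD, div_div, sum_attach (range (ℓ + 1))
    (fun i => gkwD n i * (-1) ^ i * 2 ^ i * ((ℓ + 1).choose i : ℂ))]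

/-- The Taylor coefficients at `2` of the solution: `P⁽ᵏ⁾(2) = k! · gkwQ n k`. -/
noncomputable def gkwQ (n k : ℕ) : ℂ := (n - 1).choose k * gkwD n k

theorem gkwQ_mul_gkwA {n : ℕ} (hn : 1 ≤ n) (m : ℕ) :
    gkwQ n m * gkwA n m = (2 ^ n - 1) / 2 ^ n *
      ∑ k ∈ range m, gkwQ n k * (-2) ^ k * ((n - 1 - k).choose (m - k) : ℂ) := by
  rcases m with _ | ℓ
  · simp [gkwA]
  · rw [gkwQ, gkwD_succ, mul_comm ((2 ^ n - 1) / 2 ^ n / _), mul_assoc, mul_assoc,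
      div_mul_cancel₀ _ (gkwA_ne_zero hn (by omega)), sum_mul, mul_sum, mul_sum]
    refine sum_congr rfl fun k hk => ?_
    have hchoose : ((n - 1).choose (ℓ + 1) : ℂ) * (ℓ + 1).choose k =
        (n - 1).choose k * (n - 1 - k).choose (ℓ + 1 - k) := by
      exact_mod_cast Nat.choose_mul (n := n - 1) (mem_range.mp hk).le
    rw [gkwQ, show (-2 : ℂ) ^ k = (-1) ^ k * 2 ^ k from neg_pow 2 k]
    linear_combination (2 ^ n - 1) / 2 ^ n * gkwD n k * (-1) ^ k * 2 ^ k * hchoose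

theorem gkwQ_mul_one_sub {n : ℕ} (hn : 1 ≤ n) (m : ℕ) :
    gkwQ n m * (1 - 2 ^ m / 2 ^ n) = (2 ^ n - 1) / 2 ^ n *
      ∑ k ∈ range (m + 1), gkwQ n k * (-2) ^ k * ((n - 1 - k).choose (m - k) : ℂ) := by
  rw [sum_range_succ, Nat.sub_self, Nat.choose_zero_right, mul_add, ← gkwQ_mul_gkwA hn,
    gkwA_eq]
  push_cast
  ring

theorem sum_mul_pow_mul_one_add_pow {R : Type*} [CommSemiring R] (a : ℕ → R) (u : R) (n : ℕ) :
    ∑ k ∈ range n, a k * u ^ k * (1 + u) ^ (n - 1 - k) =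
      ∑ m ∈ range n, (∑ k ∈ range (m + 1), a k * ((n - 1 - k).choose (m - k) : R)) * u ^ m := by
  calc _ = ∑ k ∈ range n, ∑ m ∈ Ico k n, a k * ((n - 1 - k).choose (m - k) : R) * u ^ m := by
        refine sum_congr rfl fun k hk => ?_
        rw [sum_Ico_eq_sum_range, add_comm 1 u, add_pow, mul_sum,
          show n - 1 - k + 1 = n - k by have := mem_range.mp hk; omega]
        refine sum_congr rfl fun j _ => ?_
        rw [Nat.add_sub_cancel_left, one_pow, mul_one, pow_add]
        ring
    _ = ∑ m ∈ range n, ∑ k ∈ range (m + 1), a k * ((n - 1 - k).choose (m - k) : R) * u ^ m :=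
        sum_comm' fun k m => by simp only [mem_range, mem_Ico]; omega
    _ = _ := by simp_rw [sum_mul]

noncomputable def gkwTaylor (n : ℕ) : ℂ[X] := ∑ k ∈ range n, C (gkwQ n k) * X ^ k

theorem coeff_gkwTaylor (n ℓ : ℕ) :
    (gkwTaylor n).coeff ℓ = if ℓ < n then gkwQ n ℓ else 0 := by
  simp [gkwTaylor, finsetSum_coeff]

theorem eval_gkwTaylor_zero {n : ℕ} (hn : 1 ≤ n) : (gkwTaylor n).eval 0 = 1 := by
  rw [← coeff_zero_eq_eval_zero, coeff_gkwTaylor, if_pos (Nat.lt_of_succ_le hn), gkwQ, gkwD]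
  simp

theorem natDegree_gkwTaylor_le (n : ℕ) : (gkwTaylor n).natDegree ≤ n - 1 :=
  natDegree_sum_le_of_forall_le _ _ fun k hk =>
    (natDegree_C_mul_X_pow_le _ _).trans (by have := mem_range.mp hk; omega)

theorem eval_gkwTaylor_eq_add (n : ℕ) (u : ℂ) :
    (gkwTaylor n).eval u = (gkwTaylor n).eval (2 * u) / 2 ^ n +
      (2 ^ n - 1) / 2 ^ n * ∑ k ∈ range n, gkwQ n k * (-2 * u) ^ k * (1 + u) ^ (n - 1 - k) := by
  simp only [gkwTaylor, eval_finsetSum, eval_mul, eval_C, eval_pow, eval_X, mul_pow,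
    ← mul_assoc]
  rw [sum_mul_pow_mul_one_add_pow (fun k => gkwQ n k * (-2) ^ k), sum_div, mul_sum,
    ← sum_add_distrib]
  refine sum_congr rfl fun m hm => ?_
  linear_combination u ^ m * gkwQ_mul_one_sub (Nat.one_le_of_lt (mem_range.mp hm)) m

theorem isGKWSolution_gkwTaylor (n : ℕ) :
    IsGKWSolution n fun z => (gkwTaylor n).eval (z - 2) := by
  filter_upwards [eventually_ne_nhds one_ne_zero] with z hz
  have hinv : (gkwTaylor n).eval (2 / z - 2) * z ^ (n - 1) =
      ∑ k ∈ range n, gkwQ n k * (-2 * (z - 1)) ^ k * (1 + (z - 1)) ^ (n - 1 - k) := by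
    simp only [gkwTaylor, eval_finsetSum, eval_mul, eval_C, eval_pow, eval_X, sum_mul]
    refine sum_congr rfl fun k hk => ?_
    rw [show z ^ (n - 1) = z ^ k * z ^ (n - 1 - k) by
        rw [← pow_add]; congr 1; have := mem_range.mp hk; omega,
      show (-2 * (z - 1)) = (2 / z - 2) * z by field_simp; ring, mul_pow]
    ring
  rw [show z + 1 - 2 = z - 1 by ring, show 2 * z - 2 = 2 * (z - 1) by ring,
    eval_gkwTaylor_eq_add n (z - 1), ← hinv]
  ring

theorem tendsto_comp_div_pow {𝕜 : Type*} [NormedField 𝕜] {h g φ ψ : 𝕜 → 𝕜} {a b : 𝕜} {m : ℕ}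
    (hh : ∀ᶠ z in 𝓝 a, h z = (z - a) ^ m * g z) (hg : ContinuousAt g a)
    (hφ : ∀ᶠ z in 𝓝 b, φ z - a = (z - b) * ψ z) (hφc : ContinuousAt φ b)
    (hψ : ContinuousAt ψ b) :
    Tendsto (fun z => h (φ z) / (z - b) ^ m) (𝓝[≠] b) (𝓝 (ψ b ^ m * g a)) := by
  have hφb : φ b = a := by simpa [sub_eq_zero] using hφ.self_of_nhds
  have hφt : Tendsto φ (𝓝 b) (𝓝 a) := hφb ▸ hφc.tendsto
  have hcont : ContinuousAt (fun z => ψ z ^ m * g (φ z)) b :=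
    (hψ.pow m).mul (hg.comp_of_eq hφc hφb)
  rw [← hφb]
  refine (hcont.tendsto.mono_left nhdsWithin_le_nhds).congr' ?_
  filter_upwards [nhdsWithin_le_nhds (hφt.eventually hh), nhdsWithin_le_nhds hφ,
    self_mem_nhdsWithin] with z hhz hφz hz
  rw [hhz, hφz, mul_pow, mul_assoc, mul_div_cancel_left₀ _ (pow_ne_zero _ (sub_ne_zero.mpr hz))]

theorem IsGKWSolution.eventually_eq_zero {n : ℕ} {h : ℂ → ℂ} (hn : 1 ≤ n)
    (hsol : IsGKWSolution n h) (ha : AnalyticAt ℂ h 2) (h2 : h 2 = 0) :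
    ∀ᶠ z in 𝓝 2, h z = 0 := by
  rw [← analyticOrderAt_eq_top]
  by_contra hne
  obtain ⟨m, hm⟩ := WithTop.ne_top_iff_exists.mp hne
  obtain ⟨g, hg, hg2, hhg⟩ := ha.analyticOrderAt_eq_natCast.mp hm.symm
  simp only [smul_eq_mul] at hhg
  have hm1 : m ≠ 0 := by
    rintro rfl
    exact hg2 (by simpa [h2] using hhg.self_of_nhds.symm)
  have hgc := hg.continuousAt
  have hlhs := tendsto_comp_div_pow (b := 1) (φ := fun z => z + 1) (ψ := fun _ => 1) hhg hgc
    (.of_forall fun z => by ring) (by fun_prop) (by fun_prop)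
  have hdil := tendsto_comp_div_pow (b := 1) (φ := fun z => 2 * z) (ψ := fun _ => 2) hhg hgc
    (.of_forall fun z => by ring) (by fun_prop) (by fun_prop)
  have hinv := tendsto_comp_div_pow (b := 1) (φ := fun z => 2 / z) (ψ := fun z => -2 / z)
    hhg hgc
    (by filter_upwards [eventually_ne_nhds one_ne_zero] with z hz; field_simp; ring)
    (by fun_prop (disch := norm_num)) (by fun_prop (disch := norm_num))
  have hpow : Tendsto (· ^ (n - 1)) (𝓝[≠] (1 : ℂ)) (𝓝 (1 ^ (n - 1))) :=
    ((continuous_pow (n - 1)).tendsto 1).mono_left nhdsWithin_le_nhds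
  have hrhs := (hdil.div_const (2 ^ n)).add
    (((hinv.const_mul (2 ^ (n + 1) - 2)).mul hpow).div_const (2 ^ (n + 1)))
  have hlim := tendsto_nhds_unique hlhs <| hrhs.congr' <| by
    filter_upwards [nhdsWithin_le_nhds hsol] with z hz
    rw [hz]
    ring
  have hA : g 2 * gkwA n m = 0 := by
    rw [gkwA_eq]
    simp only [one_pow, mul_one, div_one] at hlim
    linear_combination hlim
  exact mul_ne_zero hg2 (gkwA_ne_zero hn (Nat.one_le_iff_ne_zero.mpr hm1)) hA

theorem IsGKWSolution.eq_of_apply_two_eq {n : ℕ} {P Q : ℂ → ℂ} (hn : 1 ≤ n)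
    (hP : IsGKWSolution n P) (hQ : IsGKWSolution n Q) (hPd : Differentiable ℂ P)
    (hQd : Differentiable ℂ Q) (h2 : P 2 = Q 2) : P = Q := by
  refine AnalyticOnNhd.eq_of_eventuallyEq (fun z _ => hPd.analyticAt z)
    (fun z _ => hQd.analyticAt z) (z₀ := 2) ?_
  filter_upwards [(hP.sub hQ).eventually_eq_zero hn ((hPd.sub hQd).analyticAt 2)
    (sub_eq_zero.mpr h2)] with z hz
  exact sub_eq_zero.mp hz

theorem Polynomial.iteratedDeriv_eval {𝕜 : Type*} [NontriviallyNormedField 𝕜] (p : 𝕜[X])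
    (k : ℕ) : iteratedDeriv k (fun x => p.eval x) = fun x => (derivative^[k] p).eval x := by
  induction k generalizing p with
  | zero => rfl
  | succ k ih =>
    have hderiv : _root_.deriv (fun x => p.eval x) = fun x => p.derivative.eval x := by
      ext x
      exact p.deriv
    rw [iteratedDeriv_succ', hderiv, ih, Function.iterate_succ_apply]

theorem Polynomial.iteratedDeriv_eval_sub {𝕜 : Type*} [NontriviallyNormedField 𝕜] (p : 𝕜[X])
    (k : ℕ) (a : 𝕜) : iteratedDeriv k (fun x => p.eval (x - a)) a = k.factorial * p.coeff k := by
  rw [iteratedDeriv_comp_sub_const k (fun x => p.eval x), iteratedDeriv_eval]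
  dsimp only
  rw [sub_self, ← coeff_zero_eq_eval_zero, coeff_iterate_derivative, zero_add,
    Nat.descFactorial_self, nsmul_eq_mul]

/-- If `P` is entire with `P 2 = 1` and satisfies
`P(z+1) = 2^{-n}P(2z) + (2^{n+1}−2)2^{-(n+1)}P(2/z)z^{n-1}` near `z = 1`, then
`P^{(ℓ)}(2) = (n−1)!/(n−ℓ−1)! · D_ℓ(n)` for `ℓ ≤ n−1`, all derivatives of order `≥ n`
vanish at `2`, and `P` is a polynomial of degree at most `n − 1`. -/
theorem P_derivatives_and_polynomial (n : ℕ) (hn : 1 ≤ n) (P : ℂ → ℂ)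
    (hP : Differentiable ℂ P) (hP2 : P 2 = 1)
    (heq : ∀ᶠ z in nhds (1 : ℂ),
      P (z + 1) = P (2 * z) / 2 ^ n +
        (2 ^ (n + 1) - 2) * P (2 / z) * z ^ (n - 1) / 2 ^ (n + 1)) :
    (∀ ℓ, ℓ ≤ n - 1 →
        iteratedDeriv ℓ P 2 =
          ((Nat.factorial (n - 1) : ℂ) / (Nat.factorial (n - ℓ - 1) : ℂ)) * gkwD n ℓ) ∧
    (∀ ℓ, n ≤ ℓ → iteratedDeriv ℓ P 2 = 0) ∧
    (∃ q : Polynomial ℂ, q.natDegree ≤ n - 1 ∧ ∀ z : ℂ, P z = q.eval z) := by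
  have hFd : Differentiable ℂ fun z => (gkwTaylor n).eval (z - 2) :=
    (gkwTaylor n).differentiable.comp (differentiable_id.sub_const 2)
  have hPF : P = fun z => (gkwTaylor n).eval (z - 2) :=
    IsGKWSolution.eq_of_apply_two_eq hn heq (isGKWSolution_gkwTaylor n) hP hFd
      (by simp only [hP2, sub_self, eval_gkwTaylor_zero hn])
  subst hPF
  refine ⟨fun ℓ hℓ => ?_, fun ℓ hℓ => ?_, ⟨(gkwTaylor n).comp (X - C 2), ?_, fun z => by simp⟩⟩
  · rw [iteratedDeriv_eval_sub, coeff_gkwTaylor, if_pos (by omega), gkwQ, Nat.cast_choose ℂ hℓ,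
      show n - ℓ - 1 = n - 1 - ℓ by omega]
    have : (ℓ.factorial : ℂ) ≠ 0 := Nat.cast_ne_zero.mpr ℓ.factorial_ne_zero
    field_simp
  · rw [iteratedDeriv_eval_sub, coeff_gkwTaylor, if_neg (by omega), mul_zero]
  · calc _ ≤ (gkwTaylor n).natDegree * (X - C (2 : ℂ)).natDegree := natDegree_comp_le
      _ ≤ n - 1 := by rw [natDegree_X_sub_C, mul_one]; exact natDegree_gkwTaylor_le n
end

section
/- The operator L₀ defined on functions analytic in a neighborhood of [0,1] by L₀[f](x) = (x+1)^{−2} f(1/(x+1)) has eigenvalues (−1)^n φ^{−2n−2} for n = 0,1,2,…, where φ = (1+√5)/2; concretely, for each n there is a nonzero analytic eigenfunction f_n with L₀ f_n = (−1)^n φ^{−2n−2} f_n. -/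
/-!
The Möbius map `h x = 1/(x+1)` has the two fixed points `p = φ⁻¹` and `q = -φ`, the roots of
`X² + X = 1`, and at each of them `h x - r = -r (x - r)/(x+1)`. Hence `h` multiplies
`(x - p)/(x - q)` by the constant `p/q = -φ⁻²`, while the weight `(x+1)⁻²` is absorbed by the
factor `(x - q)⁻²`, so `(x - p)ⁿ/(x - q)ⁿ⁺²` is an eigenfunction of `L₀` with eigenvalue
`(-p)ⁿ/(-q)ⁿ⁺² = (-1)ⁿ φ⁻²ⁿ⁻²`. It is analytic on `[0,1]` because `q < 0`.
-/

open Real goldenRatio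

namespace L0

section Field

variable {K : Type*} [Field K]

theorem one_div_add_one_sub_of_sq_add_self {r : K} (hr : r ^ 2 + r = 1)
    {x : K} (hx : x + 1 ≠ 0) : 1 / (x + 1) - r = -r * (x - r) / (x + 1) := by
  field_simp
  linear_combination -hr

def eigenfunction (p q : K) (n : ℕ) (x : K) : K :=
  (x - p) ^ n / (x - q) ^ (n + 2)

theorem eigenfunction_one_div_add_one {p q : K} (hp : p ^ 2 + p = 1)
    (hq : q ^ 2 + q = 1) (n : ℕ) {x : K} (hx : x + 1 ≠ 0) (hxq : x - q ≠ 0) :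
    ((x + 1) ^ 2)⁻¹ * eigenfunction p q n (1 / (x + 1)) =
      (-p) ^ n / (-q) ^ (n + 2) * eigenfunction p q n x := by
  have hq0 : -q ≠ 0 := by rintro h; simp [neg_eq_zero.mp h] at hq
  rw [eigenfunction, eigenfunction, one_div_add_one_sub_of_sq_add_self hp hx,
    one_div_add_one_sub_of_sq_add_self hq hx, div_pow, div_pow, mul_pow, mul_pow]
  field_simp
  ring

theorem eigenfunction_ne_zero {p q x : K} (n : ℕ) (hxp : x - p ≠ 0)
    (hxq : x - q ≠ 0) : eigenfunction p q n x ≠ 0 :=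
  div_ne_zero (pow_ne_zero _ hxp) (pow_ne_zero _ hxq)

end Field

theorem analyticAt_eigenfunction {𝕜 : Type*} [NontriviallyNormedField 𝕜] (p q : 𝕜) (n : ℕ)
    {x : 𝕜} (hxq : x - q ≠ 0) : AnalyticAt 𝕜 (eigenfunction p q n) x :=
  ((analyticAt_id.sub analyticAt_const).pow n).div
    ((analyticAt_id.sub analyticAt_const).pow (n + 2)) (pow_ne_zero _ hxq)

end L0

theorem neg_goldenConj_sq_add_self : (-ψ) ^ 2 + -ψ = 1 := by
  linear_combination goldenConj_sq

theorem neg_goldenRatio_sq_add_self : (-φ) ^ 2 + -φ = 1 := by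
  linear_combination goldenRatio_sq

theorem goldenConj_pow_div_goldenRatio_pow (n : ℕ) :
    ψ ^ n / φ ^ (n + 2) = (-1) ^ n * (φ ^ (2 * n + 2))⁻¹ := by
  rw [← neg_neg ψ, ← inv_goldenRatio, neg_pow, inv_pow]
  field_simp [goldenRatio_ne_zero]
  ring

open Real in
/-- The operator `L₀[f](x) = (x+1)⁻² f(1/(x+1))` on functions analytic on a
neighborhood of `[0,1]` has, for each `n`, a nonzero analytic eigenfunction with
eigenvalue `(−1)ⁿ φ^{−2n−2}`, where `φ = (1+√5)/2`. -/
theorem L0_eigenvalues (n : ℕ) :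
    ∃ f : ℝ → ℝ, AnalyticOnNhd ℝ f (Set.Icc (0 : ℝ) 1) ∧
      (∃ x ∈ Set.Icc (0 : ℝ) 1, f x ≠ 0) ∧
      ∀ x ∈ Set.Icc (0 : ℝ) 1,
        ((x + 1) ^ 2)⁻¹ * f (1 / (x + 1)) =
          (-1) ^ n * (((1 + Real.sqrt 5) / 2) ^ (2 * n + 2))⁻¹ * f x := by
  have hxq : ∀ x ∈ Set.Icc (0 : ℝ) 1, x - -φ ≠ 0 := fun x hx => by
    linarith [hx.1, goldenRatio_pos]
  refine ⟨L0.eigenfunction (-ψ) (-φ) n, fun x hx => L0.analyticAt_eigenfunction _ _ n (hxq x hx),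
    ⟨0, ⟨le_rfl, zero_le_one⟩, ?_⟩, fun x hx => ?_⟩
  · exact L0.eigenfunction_ne_zero n (by linarith [goldenConj_neg]) (hxq 0 ⟨le_rfl, zero_le_one⟩)
  · rw [L0.eigenfunction_one_div_add_one neg_goldenConj_sq_add_self neg_goldenRatio_sq_add_self n
      (by linarith [hx.1]) (hxq x hx), neg_neg, neg_neg, goldenConj_pow_div_goldenRatio_pow]
end
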